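/- arXiv:1912.01607 — 3 statements merged into one kernel-verified Lean document; each statement's English description precedes it below -/
import Mathlib

section
/- The Gaussian scale mixture representation of the Student's t density: for all real t, the integral over λ ∈ (0,∞) of N(t|μ, 1/(σλ)) · Gamma(λ|ν/2, ν/2) dλ equals St(t|μ,σ,ν). -/
open Real MeasureTheory Set

theorem student_t_gaussian_scale_mixture
    (μ σ ν : ℝ) (hσ : 0 < σ) (hν : 0 < ν) (t : ℝ) :
    ∫ l in Ioi (0:ℝ),
        ((2 * π * (1 / (σ * l))) ^ (-(1:ℝ)/2) * Real.exp (-(t - μ)^2 / (2 * (1 / (σ * l))))) *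
        ((ν/2) ^ (ν/2) / Real.Gamma (ν/2) * l ^ (ν/2 - 1) * Real.exp (-(ν/2) * l))
      = Real.Gamma ((ν+1)/2) / Real.Gamma (ν/2) * (σ / (ν * π)) ^ ((1:ℝ)/2) *
        (1 + σ * (t - μ)^2 / ν) ^ (-((ν+1)/2)) := by
  have hπ := Real.pi_pos
  set d : ℝ := (t - μ)^2 with hd
  have hd0 : 0 ≤ d := sq_nonneg _
  set b : ℝ := (ν + σ * d) / 2 with hb
  have hb0 : 0 < b := by positivity
  set a : ℝ := (ν + 1) / 2 with ha
  have ha0 : 0 < a := by positivity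
  set K : ℝ := (σ / (2 * π)) ^ ((1:ℝ)/2) * ((ν/2) ^ (ν/2) / Real.Gamma (ν/2)) with hK
  have hstep : ∫ l in Ioi (0:ℝ),
        ((2 * π * (1 / (σ * l))) ^ (-(1:ℝ)/2) * Real.exp (-d / (2 * (1 / (σ * l))))) *
        ((ν/2) ^ (ν/2) / Real.Gamma (ν/2) * l ^ (ν/2 - 1) * Real.exp (-(ν/2) * l))
      = ∫ l in Ioi (0:ℝ), K * (l ^ (a - 1) * Real.exp (-(b * l))) := by
    refine setIntegral_congr_fun measurableSet_Ioi (fun l hl => ?_)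
    have hl0 : (0:ℝ) < l := hl
    have hσl : 0 < σ * l := by positivity
    have h1 : (2 * π * (1 / (σ * l))) ^ (-(1:ℝ)/2)
        = (σ / (2 * π)) ^ ((1:ℝ)/2) * l ^ ((1:ℝ)/2) := by
      have : 2 * π * (1 / (σ * l)) = ((σ / (2 * π)) * l)⁻¹ := by
        field_simp
      rw [this, Real.inv_rpow (by positivity), show (-(1:ℝ)/2) = -(1/2) by ring,
        Real.rpow_neg (by positivity), inv_inv, Real.mul_rpow (by positivity) hl0.le]
    have h2 : Real.exp (-d / (2 * (1 / (σ * l)))) = Real.exp (-(σ * d / 2 * l)) := by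
      congr 1
      field_simp
    have h3 : l ^ ((1:ℝ)/2) * l ^ (ν/2 - 1) = l ^ (a - 1) := by
      rw [← Real.rpow_add hl0]; congr 1; rw [ha]; ring
    have h4 : Real.exp (-(σ * d / 2 * l)) * Real.exp (-(ν/2) * l) = Real.exp (-(b * l)) := by
      rw [← Real.exp_add]; congr 1; rw [hb]; ring
    calc ((2 * π * (1 / (σ * l))) ^ (-(1:ℝ)/2) * Real.exp (-d / (2 * (1 / (σ * l))))) *
        ((ν/2) ^ (ν/2) / Real.Gamma (ν/2) * l ^ (ν/2 - 1) * Real.exp (-(ν/2) * l))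
        = K * ((l ^ ((1:ℝ)/2) * l ^ (ν/2 - 1)) *
            (Real.exp (-(σ * d / 2 * l)) * Real.exp (-(ν/2) * l))) := by
          rw [h1, h2, hK]; ring
      _ = K * (l ^ (a - 1) * Real.exp (-(b * l))) := by rw [h3, h4]
  rw [hstep, MeasureTheory.integral_const_mul,
    Real.integral_rpow_mul_exp_neg_mul_Ioi ha0 hb0]
  -- now pure algebra
  have key : (1 + σ * d / ν) ^ (-a) = (ν/2) ^ a * (1/b) ^ a := by
    have h5 : 1 + σ * d / ν = b / (ν/2) := by
      rw [hb]; field_simp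
    rw [h5, Real.rpow_neg (by positivity), Real.div_rpow hb0.le (by positivity),
      Real.div_rpow (by norm_num : (0:ℝ) ≤ 1) hb0.le, Real.one_rpow]
    field_simp
  have hν2 : (σ / (ν * π)) ^ ((1:ℝ)/2) * (ν/2) ^ a
      = (σ / (2 * π)) ^ ((1:ℝ)/2) * (ν/2) ^ (ν/2) := by
    have hsplit : (ν/2 : ℝ) ^ a = (ν/2) ^ (ν/2) * (ν/2) ^ ((1:ℝ)/2) := by
      rw [← Real.rpow_add (by positivity)]; congr 1; rw [ha]; ring
    rw [hsplit, ← mul_assoc, mul_comm ((σ / (ν * π)) ^ ((1:ℝ)/2)) _, mul_assoc,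
      ← Real.mul_rpow (by positivity) (by positivity)]
    rw [show σ / (ν * π) * (ν/2) = σ / (2 * π) by field_simp]
    ring
  rw [key, hK]
  linear_combination (- Real.Gamma a / Real.Gamma (ν/2) * (1/b)^a) * hν2
end

section
/- Let T ~ St(t|0, I, ν) be standard n-dimensional Student's t and k = (k₁,…,kₙ) ∈ ℕⁿ with Σkᵢ < ν and all kᵢ even. Then E[∏ Tᵢ^{kᵢ}] = ν^{(Σkᵢ)/2} · Γ((ν-Σkᵢ)/2)/Γ(ν/2) · ∏ kᵢ! / (2^{Σkᵢ} ∏(kᵢ/2)!). -/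
/-!
Since `(c + |t|²) ^ (-a) = Γ(a)⁻¹ ∫₀^∞ x ^ (a - 1) e^{-(c + |t|²) x} dx`, the Student density is a
Gamma mixture of centred Gaussians. After exchanging the integrals, the `t`-integral factors into
one-dimensional Gaussian moments `∫ tᵏ e^{-x t²} dt = Γ((k + 1)/2) x^{-(k + 1)/2}` (for even `k`),
and the remaining `x`-integral is again a Gamma integral, producing `Γ((ν - Σkᵢ)/2)`. The values
`Γ(m + 1/2) = √π (2m)! / (4ᵐ m!)` turn the Gaussian moments into the factorials of the statement.
-/

open Real MeasureTheory Finset Set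
open scoped Nat

theorem Nat.factorial_two_mul_eq_mul_doubleFactorial (m : ℕ) : (2 * m)! = 2 ^ m * m ! * (2 * m - 1)‼ := by
  cases m with
  | zero => rfl
  | succ j =>
    rw [show 2 * (j + 1) = 2 * j + 1 + 1 by ring, Nat.factorial_eq_mul_doubleFactorial,
      show 2 * j + 1 + 1 = 2 * (j + 1) by ring, Nat.doubleFactorial_two_mul]
    rfl

theorem Real.Gamma_add_one_div_two_of_even {k : ℕ} (hk : Even k) :
    Gamma ((k + 1) / 2) = √π * k ! / (2 ^ k * (k / 2)!) := by
  obtain ⟨m, rfl⟩ := hk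
  rw [← two_mul, Nat.mul_div_cancel_left m two_pos, Nat.factorial_two_mul_eq_mul_doubleFactorial]
  have : ((2 * m : ℕ) + 1 : ℝ) / 2 = m + 1 / 2 := by push_cast; ring
  rw [this, Gamma_nat_add_half]
  push_cast
  field_simp
  ring

theorem integral_pow_mul_exp_neg_mul_sq_of_even {k : ℕ} (hk : Even k) {b : ℝ} (hb : 0 < b) :
    ∫ x : ℝ, x ^ k * exp (-b * x ^ 2) = Gamma ((k + 1) / 2) * b ^ (-((k : ℝ) + 1) / 2) := by
  have h_abs : (fun x : ℝ => x ^ k * exp (-b * x ^ 2)) = fun x => |x| ^ k * exp (-b * |x| ^ 2) := by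
    simp only [hk.pow_abs, sq_abs]
  have h_rpow : EqOn (fun x : ℝ => x ^ k * exp (-b * x ^ 2))
      (fun x => x ^ (k : ℝ) * exp (-b * x ^ (2 : ℝ))) (Ioi 0) := fun x _ => by
    simp only [rpow_natCast, rpow_two]
  rw [h_abs, integral_comp_abs (f := fun x => x ^ k * exp (-b * x ^ 2)),
    setIntegral_congr_fun measurableSet_Ioi h_rpow,
    integral_rpow_mul_exp_neg_mul_rpow two_pos (by linarith [k.cast_nonneg (α := ℝ)]) hb]
  ring

theorem integrable_pow_mul_exp_neg_mul_sq (k : ℕ) {b : ℝ} (hb : 0 < b) :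
    Integrable fun x : ℝ => x ^ k * exp (-b * x ^ 2) := by
  simpa using integrable_rpow_mul_exp_neg_mul_sq hb (s := k) (by linarith [k.cast_nonneg (α := ℝ)])

theorem rpow_neg_eq_integral {a r : ℝ} (ha : 0 < a) (hr : 0 < r) :
    r ^ (-a) = (Gamma a)⁻¹ * ∫ x in Ioi 0, x ^ (a - 1) * exp (-(r * x)) := by
  rw [integral_rpow_mul_exp_neg_mul_Ioi ha hr, one_div, inv_rpow hr.le, rpow_neg hr.le,
    mul_comm, mul_inv_cancel_right₀ (Gamma_pos_of_pos ha).ne']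

theorem integrableOn_rpow_mul_exp_neg_mul {s r : ℝ} (hs : -1 < s) (hr : 0 < r) :
    IntegrableOn (fun x : ℝ => x ^ s * exp (-(r * x))) (Ioi 0) :=
  (integrableOn_rpow_mul_exp_neg_mul_rpow hs zero_lt_one hr).congr_fun
    (fun x _ => by simp only [rpow_one, neg_mul]) measurableSet_Ioi

theorem one_add_div_rpow_neg {ν s : ℝ} (hν : 0 < ν) (hs : 0 ≤ s) (a : ℝ) :
    (1 + s / ν) ^ (-a) = ν ^ a * (ν + s) ^ (-a) := by
  rw [one_add_div hν.ne', div_rpow (by positivity) hν.le, rpow_neg (by positivity),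
    rpow_neg (by positivity), div_eq_mul_inv, inv_inv, mul_comm]

section Pi

variable {ι : Type*} [Fintype ι]

theorem integrable_prod_pow_mul_exp_neg_mul_sq (k : ι → ℕ) {b : ℝ} (hb : 0 < b) :
    Integrable fun t : ι → ℝ => ∏ i, t i ^ k i * exp (-b * t i ^ 2) :=
  Integrable.fintype_prod (f := fun i x => x ^ k i * exp (-b * x ^ 2))
    fun i => integrable_pow_mul_exp_neg_mul_sq (k i) hb

theorem prod_pow_mul_exp_neg_mul_add_sum_sq (k : ι → ℕ) (t : ι → ℝ) (c x : ℝ) :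
    (∏ i, t i ^ k i) * exp (-((c + ∑ i, t i ^ 2) * x))
      = exp (-(c * x)) * ∏ i, t i ^ k i * exp (-x * t i ^ 2) := by
  rw [prod_mul_distrib, ← exp_sum, add_mul, sum_mul, neg_add, exp_add]
  simp only [neg_mul, mul_comm x, ← sum_neg_distrib]
  ring

theorem prod_pow_mul_rpow_neg_add_sum_sq_eq_integral (k : ι → ℕ) (t : ι → ℝ) {a c : ℝ}
    (ha : 0 < a) (hc : 0 < c) :
    (∏ i, t i ^ k i) * (c + ∑ i, t i ^ 2) ^ (-a) = (Gamma a)⁻¹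
      * ∫ x in Ioi 0, x ^ (a - 1) * exp (-(c * x)) * ∏ i, t i ^ k i * exp (-x * t i ^ 2) := by
  rw [rpow_neg_eq_integral ha (by positivity), mul_left_comm, ← integral_const_mul]
  congr 2 with x
  rw [mul_left_comm, prod_pow_mul_exp_neg_mul_add_sum_sq]
  ring

theorem integral_prod_pow_mul_exp_neg_mul_sq {k : ι → ℕ} (heven : ∀ i, Even (k i)) {b : ℝ}
    (hb : 0 < b) :
    ∫ t : ι → ℝ, ∏ i, t i ^ k i * exp (-b * t i ^ 2)
      = (∏ i, Gamma ((k i + 1) / 2)) * b ^ (-(((∑ i, k i : ℕ) : ℝ) + Fintype.card ι) / 2) := by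
  rw [integral_fintype_prod_volume_eq_prod (f := fun i x => x ^ k i * exp (-b * x ^ 2)),
    prod_congr rfl fun i _ => integral_pow_mul_exp_neg_mul_sq_of_even (heven i) hb,
    prod_mul_distrib, ← rpow_sum_of_pos hb]
  congr 2
  push_cast
  rw [← sum_div, sum_neg_distrib, sum_add_distrib, sum_const, card_univ, nsmul_one]

theorem integral_prod_pow_mul_rpow_neg_add_sum_sq {k : ι → ℕ} (heven : ∀ i, Even (k i))
    {c a : ℝ} (hc : 0 < c) (ha : (((∑ i, k i : ℕ) : ℝ) + Fintype.card ι) / 2 < a) :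
    ∫ t : ι → ℝ, (∏ i, t i ^ k i) * (c + ∑ i, t i ^ 2) ^ (-a)
      = (∏ i, Gamma ((k i + 1) / 2)) * Gamma (a - (((∑ i, k i : ℕ) : ℝ) + Fintype.card ι) / 2)
          / Gamma a * c ^ ((((∑ i, k i : ℕ) : ℝ) + Fintype.card ι) / 2 - a) := by
  set s : ℝ := (((∑ i, k i : ℕ) : ℝ) + Fintype.card ι) / 2
  have ha₀ : 0 < a := lt_of_le_of_lt (by positivity) ha
  set F : (ι → ℝ) → ℝ → ℝ := fun t x =>
    x ^ (a - 1) * exp (-(c * x)) * ∏ i, t i ^ k i * exp (-x * t i ^ 2)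
  have h_inner : ∀ x ∈ Ioi (0 : ℝ), ∫ t, F t x
      = (∏ i, Gamma ((k i + 1) / 2)) * (x ^ (a - s - 1) * exp (-(c * x))) := fun x hx => by
    rw [integral_const_mul, integral_prod_pow_mul_exp_neg_mul_sq heven hx,
      show a - s - 1 = (a - 1) + -(((∑ i, k i : ℕ) : ℝ) + Fintype.card ι) / 2 by ring,
      rpow_add hx]
    ring
  have h_nonneg : ∀ t, ∀ x ∈ Ioi (0 : ℝ), 0 ≤ F t x := fun t x (hx : 0 < x) => by
    simp only [F]
    exact mul_nonneg (by positivity)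
      (prod_nonneg fun i _ => mul_nonneg ((heven i).pow_nonneg _) (exp_pos _).le)
  have h_int : Integrable (Function.uncurry F) (volume.prod (volume.restrict (Ioi 0))) := by
    rw [integrable_prod_iff' (by fun_prop)]
    refine ⟨(ae_restrict_iff' measurableSet_Ioi).mpr <| ae_of_all _ fun x (hx : 0 < x) =>
      (integrable_prod_pow_mul_exp_neg_mul_sq k hx).const_mul (x ^ (a - 1) * exp (-(c * x))), ?_⟩
    refine ((integrableOn_rpow_mul_exp_neg_mul (s := a - s - 1) (by linarith) hc).const_mul
      (∏ i, Gamma ((k i + 1) / 2))).congr ?_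
    filter_upwards [ae_restrict_mem measurableSet_Ioi] with x hx
    simp only [Function.uncurry_apply_pair]
    rw [← h_inner x hx]
    exact integral_congr_ae (ae_of_all _ fun t => (Real.norm_of_nonneg (h_nonneg t x hx)).symm)
  calc ∫ t : ι → ℝ, (∏ i, t i ^ k i) * (c + ∑ i, t i ^ 2) ^ (-a)
      = (Gamma a)⁻¹ * ∫ x in Ioi 0, ∫ t, F t x := by
        simp only [prod_pow_mul_rpow_neg_add_sum_sq_eq_integral k _ ha₀ hc, integral_const_mul]
        rw [← integral_integral_swap h_int]
    _ = (Gamma a)⁻¹ * ∫ x in Ioi 0,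
          (∏ i, Gamma ((k i + 1) / 2)) * (x ^ (a - s - 1) * exp (-(c * x))) := by
        rw [setIntegral_congr_fun measurableSet_Ioi h_inner]
    _ = (∏ i, Gamma ((k i + 1) / 2)) * Gamma (a - s) / Gamma a * c ^ (s - a) := by
        rw [integral_const_mul, integral_rpow_mul_exp_neg_mul_Ioi (by linarith) hc, one_div,
          inv_rpow hc.le, ← rpow_neg hc.le, neg_sub]
        ring

theorem prod_Gamma_add_one_div_two_of_even {k : ι → ℕ} (heven : ∀ i, Even (k i)) :
    ∏ i, Gamma ((k i + 1) / 2) = π ^ ((Fintype.card ι : ℝ) / 2)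
      * ((∏ i, ((k i)! : ℝ)) / (2 ^ (∑ i, k i) * ∏ i, ((k i / 2)! : ℝ))) := by
  rw [prod_congr rfl fun i _ => Gamma_add_one_div_two_of_even (heven i), prod_div_distrib,
    prod_mul_distrib, prod_mul_distrib, prod_const, prod_pow_eq_pow_sum, card_univ,
    sqrt_eq_rpow, ← rpow_mul_natCast pi_pos.le]
  ring_nf

end Pi

theorem multivariate_student_t_even_moments (n : ℕ) (ν : ℝ) (hν : 0 < ν)
    (k : Fin n → ℕ) (hsum : ((∑ i, k i : ℕ) : ℝ) < ν) (heven : ∀ i, Even (k i)) :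
    ∫ t : Fin n → ℝ, (∏ i, t i ^ k i) *
        (Real.Gamma ((ν + n)/2) / Real.Gamma (ν/2) * (ν * π) ^ (-(n:ℝ)/2) *
          (1 + (∑ i, t i ^ 2) / ν) ^ (-((ν + n)/2)))
      = ν ^ (((∑ i, k i : ℕ) : ℝ)/2) * (Real.Gamma ((ν - (∑ i, k i : ℕ))/2) / Real.Gamma (ν/2)) *
          ((∏ i, ((k i).factorial : ℝ)) / (2 ^ (∑ i, k i) * ∏ i, ((k i / 2).factorial : ℝ))) := by
  set K : ℝ := ((∑ i, k i : ℕ) : ℝ) with hK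
  set a : ℝ := (ν + n) / 2
  have h_shift : a - (K + n) / 2 = (ν - K) / 2 := by ring
  have h_ν_pow : ν ^ (-(n : ℝ) / 2) * ν ^ a * ν ^ ((K + n) / 2 - a) = ν ^ (K / 2) := by
    rw [← rpow_add hν, ← rpow_add hν]
    ring_nf
  have h_π_pow : π ^ (-(n : ℝ) / 2) * π ^ ((n : ℝ) / 2) = 1 := by
    rw [← rpow_add pi_pos, neg_div, neg_add_cancel, rpow_zero]
  have hΓ : Gamma a ≠ 0 := (Gamma_pos_of_pos (by positivity)).ne'
  calc _ = Gamma a / Gamma (ν / 2) * (ν * π) ^ (-(n : ℝ) / 2) * ν ^ a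
        * ∫ t : Fin n → ℝ, (∏ i, t i ^ k i) * (ν + ∑ i, t i ^ 2) ^ (-a) := by
        rw [← integral_const_mul]
        congr with t
        rw [one_add_div_rpow_neg hν (by positivity)]
        ring
    _ = (ν ^ (-(n : ℝ) / 2) * ν ^ a * ν ^ ((K + n) / 2 - a))
          * (π ^ (-(n : ℝ) / 2) * π ^ ((n : ℝ) / 2)) * (Gamma ((ν - K) / 2) / Gamma (ν / 2))
          * ((∏ i, ((k i)! : ℝ)) / (2 ^ (∑ i, k i) * ∏ i, ((k i / 2)! : ℝ))) := by
        rw [integral_prod_pow_mul_rpow_neg_add_sum_sq heven hν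
            (by rw [Fintype.card_fin]; linarith), ← hK,
          prod_Gamma_add_one_div_two_of_even heven, Fintype.card_fin, h_shift,
          mul_rpow hν.le pi_pos.le]
        field_simp
    _ = _ := by rw [h_ν_pow, h_π_pow, mul_one]
end

section
/- Let T ~ St(t|0, I, ν) be standard n-dimensional Student's t and k ∈ ℕⁿ with Σkᵢ < ν. Then the mixed absolute moment E[∏ |Tᵢ|^{kᵢ}] = ν^{(Σkᵢ)/2} · Γ((ν-Σkᵢ)/2)/Γ(ν/2) · ∏ᵢ Γ((kᵢ+1)/2)/√π. -/
/-!
The Student kernel is a Gamma mixture of Gaussians: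
`(1 + |t|²/ν)^(-p) = Γ(p)⁻¹ ∫₀^∞ s^(p-1) e^(-s) e^(-(s/ν)|t|²) ds`.
After exchanging the two integrals (Tonelli), the `t`-integral factorises into one-dimensional
Gaussian absolute moments `∫ |u|^k e^(-bu²) du = b^(-(k+1)/2) Γ((k+1)/2)`, and what is left of the
`s`-integral is again a Gamma integral, `ν^((K+n)/2) Γ(p - (K+n)/2)` with `K = Σ kᵢ`. For
`p = (ν+n)/2` the normalising constant of the density then cancels down to the stated formula.
-/

open Real MeasureTheory Finset Set
open scoped ENNReal

theorem integral_abs_pow_mul_exp_neg_mul_sq {b : ℝ} (hb : 0 < b) (k : ℕ) :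
    ∫ u : ℝ, |u| ^ k * exp (-b * u ^ 2) = b ^ (-((k + 1 : ℝ) / 2)) * Gamma ((k + 1) / 2) := by
  have hk : (-1 : ℝ) < k := neg_one_lt_zero.trans_le k.cast_nonneg
  have habs : ∀ u : ℝ, |u| ^ k * exp (-b * u ^ 2) = |u| ^ k * exp (-b * |u| ^ 2) := fun u => by
    rw [sq_abs]
  simp_rw [habs]
  rw [integral_comp_abs (f := fun u => u ^ k * exp (-b * u ^ 2))]
  have := integral_rpow_mul_exp_neg_mul_rpow two_pos hk hb
  simp only [rpow_natCast, rpow_two] at this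
  rw [this, neg_div]
  ring

theorem integral_prod_abs_pow_mul_exp_neg_mul_sum_sq {ι : Type*} [Fintype ι] (k : ι → ℕ)
    {b : ℝ} (hb : 0 < b) :
    ∫ t : ι → ℝ, (∏ i, |t i| ^ k i) * exp (-b * ∑ i, t i ^ 2)
      = b ^ (-(((∑ i, k i : ℕ) + Fintype.card ι : ℝ) / 2)) * ∏ i, Gamma ((k i + 1) / 2) := by
  have hsplit : ∀ t : ι → ℝ, (∏ i, |t i| ^ k i) * exp (-b * ∑ i, t i ^ 2)
      = ∏ i, (|t i| ^ k i * exp (-b * t i ^ 2)) := fun t => by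
    rw [mul_sum, exp_sum, prod_mul_distrib]
  simp_rw [hsplit]
  rw [integral_fintype_prod_volume_eq_prod (f := fun i u => |u| ^ k i * exp (-b * u ^ 2))]
  simp_rw [integral_abs_pow_mul_exp_neg_mul_sq hb]
  rw [prod_mul_distrib, ← rpow_sum_of_pos hb]
  congr 2
  push_cast
  rw [sum_neg_distrib, ← sum_div, sum_add_distrib]
  simp

theorem lintegral_Ioi_rpow_div_Gamma_mul_exp_neg_mul {a r : ℝ} (ha : 0 < a) (hr : 0 < r) :
    ∫⁻ s in Ioi 0, ENNReal.ofReal (s ^ (a - 1) / Gamma a * exp (-(r * s)))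
      = ENNReal.ofReal (r ^ (-a)) := by
  have hval : ∫ s in Ioi 0, s ^ (a - 1) / Gamma a * exp (-(r * s)) = r ^ (-a) := by
    simp_rw [div_mul_eq_mul_div, integral_div, integral_rpow_mul_exp_neg_mul_Ioi ha hr]
    rw [one_div, inv_rpow hr.le, rpow_neg hr.le]
    field_simp [(Gamma_pos_of_pos ha).ne']
  rw [← hval, ofReal_integral_eq_lintegral_ofReal]
  · exact .of_integral_ne_zero (by rw [hval]; positivity)
  · filter_upwards [ae_restrict_mem measurableSet_Ioi] with s (hs : 0 < s)
    positivity

theorem lintegral_mul_ofReal_rpow_neg {X : Type*} [MeasurableSpace X] {μ : Measure X} [SFinite μ]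
    {f : X → ℝ≥0∞} {r : X → ℝ} (hf : Measurable f) (hr : Measurable r) (hr0 : ∀ x, 0 < r x)
    {p : ℝ} (hp : 0 < p) :
    ∫⁻ x, f x * ENNReal.ofReal (r x ^ (-p)) ∂μ
      = ∫⁻ s in Ioi 0, ENNReal.ofReal (s ^ (p - 1) / Gamma p) *
          ∫⁻ x, f x * ENNReal.ofReal (exp (-(r x * s))) ∂μ := by
  have hmeas : Measurable fun z : X × ℝ =>
      f z.1 * (ENNReal.ofReal (z.2 ^ (p - 1) / Gamma p) *
        ENNReal.ofReal (exp (-(r z.1 * z.2)))) := by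
    fun_prop
  calc ∫⁻ x, f x * ENNReal.ofReal (r x ^ (-p)) ∂μ
      = ∫⁻ x, (∫⁻ s in Ioi 0, f x *
          (ENNReal.ofReal (s ^ (p - 1) / Gamma p) * ENNReal.ofReal (exp (-(r x * s))))) ∂μ := by
        refine lintegral_congr fun x => ?_
        rw [← lintegral_Ioi_rpow_div_Gamma_mul_exp_neg_mul hp (hr0 x),
          ← lintegral_const_mul _ (by fun_prop)]
        refine setLIntegral_congr_fun measurableSet_Ioi fun s (hs : 0 < s) => ?_
        rw [ENNReal.ofReal_mul (by positivity)]
    _ = ∫⁻ s in Ioi 0, ∫⁻ x, f x *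
          (ENNReal.ofReal (s ^ (p - 1) / Gamma p) * ENNReal.ofReal (exp (-(r x * s)))) ∂μ :=
        lintegral_lintegral_swap hmeas.aemeasurable
    _ = _ := by
        refine lintegral_congr fun s => ?_
        rw [← lintegral_const_mul _ (by fun_prop)]
        simp_rw [mul_left_comm (f _)]

theorem lintegral_prod_abs_pow_mul_exp_neg_mul_one_add_sum_sq_div {ι : Type*} [Fintype ι]
    (k : ι → ℕ) {ν s : ℝ} (hν : 0 < ν) (hs : 0 < s) :
    ∫⁻ t : ι → ℝ, ENNReal.ofReal (∏ i, |t i| ^ k i) *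
        ENNReal.ofReal (exp (-((1 + (∑ i, t i ^ 2) / ν) * s)))
      = ENNReal.ofReal (exp (-s) * (s / ν) ^ (-(((∑ i, k i : ℕ) + Fintype.card ι : ℝ) / 2)) *
          ∏ i, Gamma ((k i + 1) / 2)) := by
  have hsplit : ∀ t : ι → ℝ, ENNReal.ofReal (∏ i, |t i| ^ k i) *
      ENNReal.ofReal (exp (-((1 + (∑ i, t i ^ 2) / ν) * s)))
      = ENNReal.ofReal (exp (-s) * ((∏ i, |t i| ^ k i) * exp (-(s / ν) * ∑ i, t i ^ 2))) :=
    fun t => by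
      rw [← ENNReal.ofReal_mul (by positivity), mul_left_comm, ← exp_add]
      congr 3; field_simp; ring
  have hval := integral_prod_abs_pow_mul_exp_neg_mul_sum_sq k (div_pos hs hν)
  simp_rw [hsplit]
  rw [← ofReal_integral_eq_lintegral_ofReal, integral_const_mul, hval, mul_assoc]
  · exact (Integrable.of_integral_ne_zero (by rw [hval]; positivity)).const_mul _
  · exact Filter.Eventually.of_forall fun t => by positivity

theorem lintegral_prod_abs_pow_mul_one_add_sum_sq_div_rpow_neg {ι : Type*} [Fintype ι]
    (k : ι → ℕ) {ν p : ℝ} (hν : 0 < ν)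
    (hp : ((∑ i, k i : ℕ) + Fintype.card ι : ℝ) / 2 < p) :
    ∫⁻ t : ι → ℝ, ENNReal.ofReal ((∏ i, |t i| ^ k i) * (1 + (∑ i, t i ^ 2) / ν) ^ (-p))
      = ENNReal.ofReal (ν ^ (((∑ i, k i : ℕ) + Fintype.card ι : ℝ) / 2) *
          (Gamma (p - ((∑ i, k i : ℕ) + Fintype.card ι : ℝ) / 2) / Gamma p) *
          ∏ i, Gamma ((k i + 1) / 2)) := by
  set m : ℝ := ((∑ i, k i : ℕ) + Fintype.card ι : ℝ) / 2
  have hpm : 0 < p - m := sub_pos.mpr hp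
  have hp0 : 0 < p := (by positivity : 0 ≤ m).trans_lt hp
  have hsplit : ∀ s ∈ Ioi (0 : ℝ), ENNReal.ofReal (s ^ (p - 1) / Gamma p) *
      ENNReal.ofReal (exp (-s) * (s / ν) ^ (-m) * ∏ i, Gamma ((k i + 1) / 2))
      = ENNReal.ofReal (ν ^ m * (Gamma (p - m) / Gamma p) * ∏ i, Gamma ((k i + 1) / 2)) *
          ENNReal.ofReal (s ^ (p - m - 1) / Gamma (p - m) * exp (-(1 * s))) := by
    intro s (hs : 0 < s)
    have hpow : s ^ (p - m - 1) = s ^ (p - 1) * s ^ (-m) := by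
      rw [← rpow_add hs]; ring_nf
    rw [← ENNReal.ofReal_mul (by positivity), ← ENNReal.ofReal_mul (by positivity), hpow,
      div_rpow hs.le hν.le, rpow_neg hν.le m]
    congr 1
    field_simp
  calc ∫⁻ t : ι → ℝ, ENNReal.ofReal ((∏ i, |t i| ^ k i) * (1 + (∑ i, t i ^ 2) / ν) ^ (-p))
      = ∫⁻ t : ι → ℝ, ENNReal.ofReal (∏ i, |t i| ^ k i) *
          ENNReal.ofReal ((1 + (∑ i, t i ^ 2) / ν) ^ (-p)) :=
        lintegral_congr fun t => ENNReal.ofReal_mul (by positivity)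
    _ = ∫⁻ s in Ioi 0, ENNReal.ofReal (s ^ (p - 1) / Gamma p) *
          ENNReal.ofReal (exp (-s) * (s / ν) ^ (-m) * ∏ i, Gamma ((k i + 1) / 2)) := by
        rw [lintegral_mul_ofReal_rpow_neg (by fun_prop) (by fun_prop) (fun t => by positivity)
          hp0]
        exact setLIntegral_congr_fun measurableSet_Ioi fun s hs => by
          rw [lintegral_prod_abs_pow_mul_exp_neg_mul_one_add_sum_sq_div k hν hs]
    _ = ENNReal.ofReal (ν ^ m * (Gamma (p - m) / Gamma p) * ∏ i, Gamma ((k i + 1) / 2)) := by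
        rw [setLIntegral_congr_fun measurableSet_Ioi hsplit, lintegral_const_mul _ (by fun_prop),
          lintegral_Ioi_rpow_div_Gamma_mul_exp_neg_mul hpm one_pos, one_rpow, ENNReal.ofReal_one,
          mul_one]

theorem integral_prod_abs_pow_mul_one_add_sum_sq_div_rpow_neg {ι : Type*} [Fintype ι]
    (k : ι → ℕ) {ν p : ℝ} (hν : 0 < ν)
    (hp : ((∑ i, k i : ℕ) + Fintype.card ι : ℝ) / 2 < p) :
    ∫ t : ι → ℝ, (∏ i, |t i| ^ k i) * (1 + (∑ i, t i ^ 2) / ν) ^ (-p)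
      = ν ^ (((∑ i, k i : ℕ) + Fintype.card ι : ℝ) / 2) *
          (Gamma (p - ((∑ i, k i : ℕ) + Fintype.card ι : ℝ) / 2) / Gamma p) *
          ∏ i, Gamma ((k i + 1) / 2) := by
  have hp0 : 0 < p := (by positivity : (0 : ℝ) ≤ _).trans_lt hp
  have hΓ := Gamma_pos_of_pos (sub_pos.mpr hp)
  rw [integral_eq_lintegral_of_nonneg_ae (ae_of_all _ fun t => by positivity) (by fun_prop),
    lintegral_prod_abs_pow_mul_one_add_sum_sq_div_rpow_neg k hν hp,
    ENNReal.toReal_ofReal (by positivity)]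

theorem multivariate_student_t_abs_moments (n : ℕ) (ν : ℝ) (hν : 0 < ν)
    (k : Fin n → ℕ) (hsum : ((∑ i, k i : ℕ) : ℝ) < ν) :
    ∫ t : Fin n → ℝ, (∏ i, |t i| ^ k i) *
        (Real.Gamma ((ν + n)/2) / Real.Gamma (ν/2) * (ν * π) ^ (-(n:ℝ)/2) *
          (1 + (∑ i, t i ^ 2) / ν) ^ (-((ν + n)/2)))
      = ν ^ (((∑ i, k i : ℕ) : ℝ)/2) * (Real.Gamma ((ν - (∑ i, k i : ℕ))/2) / Real.Gamma (ν/2)) *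
          ∏ i, (Real.Gamma (((k i : ℝ) + 1)/2) / Real.sqrt π) := by
  have hmoment := integral_prod_abs_pow_mul_one_add_sum_sq_div_rpow_neg k hν
    (p := (ν + n) / 2) (by rw [Fintype.card_fin]; linarith)
  set K : ℝ := ((∑ i, k i : ℕ) : ℝ)
  rw [Fintype.card_fin, show (ν + n) / 2 - (K + n) / 2 = (ν - K) / 2 by ring] at hmoment
  have hπ : π ^ (-(n : ℝ) / 2) = (√π ^ n)⁻¹ := by
    rw [sqrt_eq_rpow, ← rpow_natCast, ← rpow_mul pi_pos.le, ← rpow_neg pi_pos.le]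
    ring_nf
  have hνn : ν ^ ((K + n) / 2) * ν ^ (-(n : ℝ) / 2) = ν ^ (K / 2) := by
    rw [← rpow_add hν]; ring_nf
  simp_rw [mul_left_comm (∏ i, |_| ^ k i)]
  rw [integral_const_mul, hmoment, mul_rpow hν.le pi_pos.le, hπ, prod_div_distrib, prod_const,
    card_fin, ← hνn]
  field_simp
end
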